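/- Let M be a real d×k matrix with columns M_1,…,M_k satisfying Well-Separatedness with parameter α ∈ (0,1). Let ℓ_1,…,ℓ_r ∈ [k] be distinct indices and let ℓ, ℓ′ ∈ [k] be two distinct indices with ℓ, ℓ′ ∉ {ℓ_1,…,ℓ_r}. Then the orthogonal projection of M_ℓ − M_{ℓ′} onto the orthogonal complement of span{M_{ℓ_1},…,M_{ℓ_r}} has Euclidean norm at least α·max_{ℓ''}|M_{ℓ''}|. -/

import Mathlib

/-! Since `ℓ' ≠ ℓ`, the column `M ℓ'` lies in the span `W` of the columns other than `M ℓ`, so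
projecting `M ℓ - M ℓ'` onto `Wᗮ` gives the same vector as projecting `M ℓ`, whose norm is at least
`α · maxᵢ ‖M i‖` by well-separatedness. The span of the columns `M ℓ_t` is contained in `W`, so
its orthogonal complement contains `Wᗮ`, and projecting onto the larger subspace can only
increase the norm. -/

noncomputable def col {d k : ℕ} (M : Matrix (Fin d) (Fin k) ℝ) (ℓ : Fin k) :
    EuclideanSpace ℝ (Fin d) := WithLp.toLp 2 (fun i => M i ℓ)

/-- Norm of the component of `x` orthogonal to the span of the columns `M ℓ'`, `ℓ' ≠ ℓ`. -/
noncomputable def projNullNorm {d k : ℕ} (M : Matrix (Fin d) (Fin k) ℝ) (ℓ : Fin k)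
    (x : EuclideanSpace ℝ (Fin d)) : ℝ :=
  ‖(Submodule.orthogonalProjection ((Submodule.span ℝ {y | ∃ ℓ' : Fin k, ℓ' ≠ ℓ ∧ y = col M ℓ'})ᗮ) x :
      EuclideanSpace ℝ (Fin d))‖

namespace Submodule

variable {𝕜 E : Type*} [RCLike 𝕜] [NormedAddCommGroup E] [InnerProductSpace 𝕜 E]

theorem orthogonalProjectionOnto_orthogonal_sub_of_mem {W : Submodule 𝕜 E}
    [W.HasOrthogonalProjection] {y : E} (hy : y ∈ W) (x : E) :
    Wᗮ.orthogonalProjectionOnto (x - y) = Wᗮ.orthogonalProjectionOnto x := by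
  rw [map_sub, orthogonalProjectionOnto_orthogonal_apply_eq_zero hy, sub_zero]

theorem norm_orthogonalProjectionOnto_orthogonal_le_of_le {K W : Submodule 𝕜 E}
    [K.HasOrthogonalProjection] [W.HasOrthogonalProjection] (h : K ≤ W) (x : E) :
    ‖(Wᗮ.orthogonalProjectionOnto x : E)‖ ≤ ‖(Kᗮ.orthogonalProjectionOnto x : E)‖ := by
  rw [← orthogonalProjectionOnto_starProjection_of_le (orthogonal_le h) x]
  exact norm_orthogonalProjectionOnto_apply_le _ _

end Submodule

open Submodule in
theorem stmt12_general {d k r : ℕ} (M : Matrix (Fin d) (Fin k) ℝ)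
    (α : ℝ)
    (hWS : ∀ ℓ : Fin k, α * (⨆ ℓ' : Fin k, ‖col M ℓ'‖) ≤ projNullNorm M ℓ (col M ℓ))
    (ℓidx : Fin r → Fin k)
    (ℓ ℓ' : Fin k) (hne : ℓ ≠ ℓ')
    (hℓ : ∀ t, ℓ ≠ ℓidx t) :
    α * (⨆ ℓ'' : Fin k, ‖col M ℓ''‖) ≤
      ‖(Submodule.orthogonalProjection ((Submodule.span ℝ (Set.range fun t => col M (ℓidx t)))ᗮ)
          (col M ℓ - col M ℓ') : EuclideanSpace ℝ (Fin d))‖ := by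
  set W := span ℝ {y | ∃ ℓ'' : Fin k, ℓ'' ≠ ℓ ∧ y = col M ℓ''}
  have hK : span ℝ (Set.range fun t => col M (ℓidx t)) ≤ W :=
    span_mono <| by rintro _ ⟨t, rfl⟩; exact ⟨ℓidx t, (hℓ t).symm, rfl⟩
  have hℓ'W : col M ℓ' ∈ W := subset_span ⟨ℓ', hne.symm, rfl⟩
  calc α * (⨆ ℓ'' : Fin k, ‖col M ℓ''‖) ≤ projNullNorm M ℓ (col M ℓ) := hWS ℓ
    _ = ‖(Wᗮ.orthogonalProjectionOnto (col M ℓ - col M ℓ') : EuclideanSpace ℝ (Fin d))‖ := by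
      rw [orthogonalProjectionOnto_orthogonal_sub_of_mem hℓ'W, projNullNorm]
    _ ≤ _ := norm_orthogonalProjectionOnto_orthogonal_le_of_le hK _

theorem stmt12 {d k r : ℕ} (M : Matrix (Fin d) (Fin k) ℝ)
    (α : ℝ) (hα : α ∈ Set.Ioo (0:ℝ) 1)
    (hWS : ∀ ℓ : Fin k, α * (⨆ ℓ' : Fin k, ‖col M ℓ'‖) ≤ projNullNorm M ℓ (col M ℓ))
    (ℓidx : Fin r → Fin k) (hinj : Function.Injective ℓidx)
    (ℓ ℓ' : Fin k) (hne : ℓ ≠ ℓ')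
    (hℓ : ∀ t, ℓ ≠ ℓidx t) (hℓ' : ∀ t, ℓ' ≠ ℓidx t) :
    α * (⨆ ℓ'' : Fin k, ‖col M ℓ''‖) ≤
      ‖(Submodule.orthogonalProjection ((Submodule.span ℝ (Set.range fun t => col M (ℓidx t)))ᗮ)
          (col M ℓ - col M ℓ') : EuclideanSpace ℝ (Fin d))‖ :=
  stmt12_general M α hWS ℓidx ℓ ℓ' hne hℓ
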